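/- Let X be a compact metric space, f : X → X continuous, and α ∈ (ℕ \ {1})^ℕ. Suppose (P_k)_{k=1}^∞ is a sequence of finite clopen partitions of X with max{diam(P) : P ∈ P_k} → 0 such that for each k: |P_k| = Π_{i=1}^k α(i); P_{k+1} refines P_k; and the members of P_k are cyclically permuted by f (there is an enumeration P₀,…,P_{n-1} of P_k with f mapping P_i onto P_{(i+1) mod n}). Then (X,f) is topologically conjugate to the adding machine (Δ_α, φ_α). -/

import Mathlib

open Set

/-- Successor mod m on Fin m. -/
def finSucc {m : ℕ} (x : Fin m) : Fin m := ⟨(x.val + 1) % m, Nat.mod_lt _ x.pos⟩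

/-- Auxiliary recursion defining the add-one-with-carry map on Δ_α = Π i, Fin (α i). -/
def phiAux (α : ℕ → ℕ) (x : ∀ i, Fin (α i)) : (i : ℕ) → Fin (α i)
  | 0 => finSucc (x 0)
  | i + 1 => if (x i).val ≤ (phiAux α x i).val then x (i + 1) else finSucc (x (i + 1))

/-- The adding machine (odometer) map φ_α on Δ_α = Π i, Fin (α i). -/
def phi (α : ℕ → ℕ) (x : ∀ i, Fin (α i)) : ∀ i, Fin (α i) := fun i => phiAux α x i

/-!
Fix a point `x₀`. At level `k`, the cyclic action of `f` on the `N k = α 0 ⋯ α k` cells of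
`P k` lets us number the cells so that `x₀` lies in cell `0` and `f` moves cell `j` to cell
`j + 1 mod N k`. Since `a k (fⁿ x₀) = n mod N k` at every level, the refinement of the
partitions forces the numberings to be compatible, `a (k + 1) x ≡ a k x [MOD N k]`. The
compatible residues `(a k x)ₖ` are the mixed-radix expansion of a point of `Δ_α`, on which
`f` acts by adding one, i.e. by `φ_α`. This gives a continuous bijection `X → Δ_α`; it is
injective because the diameters of the cells tend to `0`, and surjective by compactness (nested
closed cells).
-/

section MixedRadix

variable {α : ℕ → ℕ}

def placeValue (α : ℕ → ℕ) (k : ℕ) : ℕ := ∏ i ∈ Finset.range k, α i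

theorem placeValue_succ (α : ℕ → ℕ) (k : ℕ) :
    placeValue α (k + 1) = placeValue α k * α k :=
  Finset.prod_range_succ α k

def prefixValue (α : ℕ → ℕ) (y : ∀ i, Fin (α i)) (k : ℕ) : ℕ :=
  ∑ i ∈ Finset.range k, (y i).val * placeValue α i

theorem prefixValue_succ (y : ∀ i, Fin (α i)) (k : ℕ) :
    prefixValue α y (k + 1) = prefixValue α y k + (y k).val * placeValue α k :=
  Finset.sum_range_succ _ k

theorem prefixValue_one (y : ∀ i, Fin (α i)) : prefixValue α y 1 = (y 0).val := by
  simp [prefixValue, placeValue]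

theorem prefixValue_lt_placeValue (y : ∀ i, Fin (α i)) (k : ℕ) :
    prefixValue α y k < placeValue α k := by
  induction k with
  | zero => simp [prefixValue, placeValue]
  | succ k ih =>
    calc prefixValue α y (k + 1)
        < placeValue α k + (y k).val * placeValue α k := by
          rw [prefixValue_succ]; exact Nat.add_lt_add_right ih _
      _ = ((y k).val + 1) * placeValue α k := by ring
      _ ≤ α k * placeValue α k := Nat.mul_le_mul_right _ (y k).isLt
      _ = placeValue α (k + 1) := by rw [placeValue_succ, mul_comm]

theorem prefixValue_succ_mod (y : ∀ i, Fin (α i)) (k : ℕ) :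
    prefixValue α y (k + 1) % placeValue α k = prefixValue α y k := by
  rw [prefixValue_succ, Nat.add_mul_mod_self_right,
    Nat.mod_eq_of_lt (prefixValue_lt_placeValue y k)]

theorem val_eq_prefixValue_div (y : ∀ i, Fin (α i)) (k : ℕ) :
    (y k).val = prefixValue α y (k + 1) / placeValue α k := by
  have hpos : 0 < placeValue α k := (Nat.zero_le _).trans_lt (prefixValue_lt_placeValue y k)
  rw [prefixValue_succ, Nat.add_mul_div_right _ _ hpos,
    Nat.div_eq_of_lt (prefixValue_lt_placeValue y k), zero_add]

theorem eq_of_prefixValue_eq {y z : ∀ i, Fin (α i)}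
    (h : ∀ k, prefixValue α y (k + 1) = prefixValue α z (k + 1)) : y = z :=
  funext fun k => Fin.ext <| by rw [val_eq_prefixValue_div, val_eq_prefixValue_div, h]

end MixedRadix

section Odometer

variable {α : ℕ → ℕ}

/-- The carry out of digit `i` in `phi`: it is `1` exactly when the digit wrapped around. -/
def carry (α : ℕ → ℕ) (y : ∀ i, Fin (α i)) (i : ℕ) : ℕ :=
  if (phi α y i).val < (y i).val then 1 else 0

theorem finSucc_val_add {m : ℕ} (hm : 2 ≤ m) (x : Fin m) :
    (finSucc x).val + (if (finSucc x).val < x.val then 1 else 0) * m = x.val + 1 := by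
  have hx := x.isLt
  unfold finSucc
  rcases Nat.lt_or_ge (x.val + 1) m with hlt | hge
  · simp [Nat.mod_eq_of_lt hlt]
  · have hm' : x.val + 1 = m := by omega
    simp only [hm', Nat.mod_self]
    rw [if_pos (by omega)]
    omega

theorem phi_zero_add_carry (hα : 2 ≤ α 0) (y : ∀ i, Fin (α i)) :
    (phi α y 0).val + carry α y 0 * α 0 = (y 0).val + 1 :=
  finSucc_val_add hα (y 0)

theorem phi_succ_add_carry (y : ∀ i, Fin (α i)) (i : ℕ) (hα : 2 ≤ α (i + 1)) :
    (phi α y (i + 1)).val + carry α y (i + 1) * α (i + 1) = (y (i + 1)).val + carry α y i := by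
  have hphi : phi α y (i + 1) =
      if (y i).val ≤ (phi α y i).val then y (i + 1) else finSucc (y (i + 1)) := rfl
  unfold carry
  by_cases h : (y i).val ≤ (phi α y i).val
  · rw [hphi, if_pos h, if_neg (not_lt.2 h), if_neg (lt_irrefl _), zero_mul]
  · rw [hphi, if_neg h, if_pos (not_le.1 h)]
    exact finSucc_val_add hα _

theorem prefixValue_phi_add_carry (hα : ∀ i, 2 ≤ α i) (y : ∀ i, Fin (α i)) (k : ℕ) :
    prefixValue α (phi α y) (k + 1) + carry α y k * placeValue α (k + 1) =
      prefixValue α y (k + 1) + 1 := by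
  induction k with
  | zero =>
    simpa [prefixValue_one, placeValue] using phi_zero_add_carry (hα 0) y
  | succ k ih =>
    calc prefixValue α (phi α y) (k + 2) + carry α y (k + 1) * placeValue α (k + 2)
        = prefixValue α (phi α y) (k + 1) + ((phi α y (k + 1)).val +
            carry α y (k + 1) * α (k + 1)) * placeValue α (k + 1) := by
          rw [prefixValue_succ _ (k + 1), placeValue_succ α (k + 1)]; ring
      _ = prefixValue α (phi α y) (k + 1) + carry α y k * placeValue α (k + 1) +
            (y (k + 1)).val * placeValue α (k + 1) := by
          rw [phi_succ_add_carry y k (hα _)]; ring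
      _ = prefixValue α y (k + 2) + 1 := by
          rw [ih, prefixValue_succ _ (k + 1)]; ring

theorem prefixValue_phi (hα : ∀ i, 2 ≤ α i) (y : ∀ i, Fin (α i)) (k : ℕ) :
    prefixValue α (phi α y) (k + 1) = (prefixValue α y (k + 1) + 1) % placeValue α (k + 1) := by
  rw [← prefixValue_phi_add_carry hα, Nat.add_mul_mod_self_right,
    Nat.mod_eq_of_lt (prefixValue_lt_placeValue _ _)]

end Odometer

section CyclicFactor

variable {X : Type*} {f : X → X} {n : ℕ} {a c : X → ℕ} {x₀ : X}

/-- `a` is a factor map from `(X, f)` onto the rotation `j ↦ j + 1` of `ℤ/n`. -/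
structure IsCyclicFactor (f : X → X) (n : ℕ) (a : X → ℕ) : Prop where
  lt : ∀ x, a x < n
  map_apply : ∀ x, a (f x) = (a x + 1) % n

theorem IsCyclicFactor.iterate (ha : IsCyclicFactor f n a) (ha₀ : a x₀ = 0) (j : ℕ) :
    a (f^[j] x₀) = j % n := by
  induction j with
  | zero => simpa using ha₀
  | succ j ih => rw [Function.iterate_succ_apply', ha.map_apply, ih, Nat.mod_add_mod]

theorem IsCyclicFactor.exists_eq (ha : IsCyclicFactor f n a) (ha₀ : a x₀ = 0) {j : ℕ}
    (hj : j < n) : ∃ x, a x = j :=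
  ⟨f^[j] x₀, by rw [ha.iterate ha₀, Nat.mod_eq_of_lt hj]⟩

/-- Along the orbit of `x₀` both factors are known, `a (f^[j] x₀) = j % n`, and every fibre
of `b` meets that orbit. -/
theorem IsCyclicFactor.mod_eq_of_factor {m : ℕ} {b : X → ℕ} (ha : IsCyclicFactor f n a)
    (hb : IsCyclicFactor f m b) (ha₀ : a x₀ = 0) (hb₀ : b x₀ = 0)
    (hab : ∀ x y, b x = b y → a x = a y) (x : X) : b x % n = a x := by
  have hx : b (f^[b x] x₀) = b x := by rw [hb.iterate hb₀, Nat.mod_eq_of_lt (hb.lt x)]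
  rw [hab _ _ hx.symm, ha.iterate ha₀]

theorem IsCyclicFactor.exists_normalize (hc : IsCyclicFactor f n c) (x₀ : X) :
    ∃ a, IsCyclicFactor f n a ∧ a x₀ = 0 ∧ ∀ x y, a x = a y ↔ c x = c y := by
  have hshift : ∀ x y, (c x + (n - c x₀)) % n = (c y + (n - c x₀)) % n ↔ c x = c y := by
    intro x y
    refine ⟨fun h => ?_, fun h => by rw [h]⟩
    have := Nat.ModEq.add_right_cancel' _ h
    rwa [Nat.ModEq, Nat.mod_eq_of_lt (hc.lt x), Nat.mod_eq_of_lt (hc.lt y)] at this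
  have hn : 0 < n := (hc.lt x₀).trans_le' (Nat.zero_le _)
  refine ⟨fun x => (c x + (n - c x₀)) % n, ⟨fun x => Nat.mod_lt _ hn, fun x => ?_⟩, ?_,
    hshift⟩
  · simp only [hc.map_apply, Nat.mod_add_mod, Nat.add_right_comm]
  · have := hc.lt x₀
    simp only [Nat.add_sub_cancel' this.le, Nat.mod_self]

end CyclicFactor

section Partitions

variable {X : Type*}

theorem exists_mem_of_biUnion_eq_univ {P : Finset (Set X)}
    (hcover : ⋃ A ∈ (P : Set (Set X)), A = univ) (x : X) : ∃ A ∈ P, x ∈ A := by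
  simpa using Set.iUnion₂_eq_univ_iff.1 hcover x

def IsCellIndex (P : Finset (Set X)) (a : X → ℕ) : Prop :=
  ∀ A ∈ P, ∀ x ∈ A, a ⁻¹' {a x} = A

theorem IsCellIndex.isLocallyConstant [TopologicalSpace X] {P : Finset (Set X)} {a : X → ℕ}
    (ha : IsCellIndex P a) (hcover : ⋃ A ∈ (P : Set (Set X)), A = univ)
    (hopen : ∀ A ∈ P, IsOpen A) : IsLocallyConstant a := by
  refine (IsLocallyConstant.iff_exists_open a).2 fun x => ?_
  obtain ⟨A, hA, hxA⟩ := exists_mem_of_biUnion_eq_univ hcover x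
  exact ⟨A, hopen A hA, hxA, fun y hy => by rwa [← ha A hA x hxA] at hy⟩

theorem IsCellIndex.eq_of_refines {P Q : Finset (Set X)} {a b : X → ℕ} (ha : IsCellIndex P a)
    (hb : IsCellIndex Q b) (hcover : ⋃ B ∈ (Q : Set (Set X)), B = univ)
    (href : ∀ B ∈ Q, ∃ A ∈ P, B ⊆ A) {x y : X} (hxy : b x = b y) : a x = a y := by
  obtain ⟨B, hB, hxB⟩ := exists_mem_of_biUnion_eq_univ hcover x
  obtain ⟨A, hA, hBA⟩ := href B hB
  have hyB : y ∈ B := by rw [← hb B hB x hxB]; exact hxy.symm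
  have hyA : y ∈ a ⁻¹' {a x} := by rw [ha A hA x (hBA hxB)]; exact hBA hyB
  exact hyA.symm

theorem eq_of_forall_isCellIndex_eq [MetricSpace X] [CompactSpace X] {P : ℕ → Finset (Set X)}
    {a : ℕ → X → ℕ} (ha : ∀ k, IsCellIndex (P k) (a k))
    (hcover : ∀ k, ⋃ A ∈ (P k : Set (Set X)), A = univ)
    (hdiam : ∀ ε > (0 : ℝ), ∃ K : ℕ, ∀ k ≥ K, ∀ A ∈ P k, Metric.diam A < ε)
    {x y : X} (hxy : ∀ k, a k x = a k y) : x = y := by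
  refine eq_of_forall_dist_le fun ε hε => ?_
  obtain ⟨K, hK⟩ := hdiam ε hε
  obtain ⟨A, hA, hxA⟩ := exists_mem_of_biUnion_eq_univ (hcover K) x
  have hyA : y ∈ A := by rw [← ha K A hA x hxA]; exact (hxy K).symm
  exact (Metric.dist_le_diam_of_mem (isCompact_univ.isBounded.subset (subset_univ _)) hxA hyA).trans
    (hK K le_rfl A hA).le

def IsCyclicEnumeration (f : X → X) (P : Finset (Set X)) (e : ℕ → Set X) : Prop :=
  (∀ i < P.card, e i ∈ P) ∧
  (∀ A ∈ P, ∃ i < P.card, e i = A) ∧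
  (∀ i < P.card, ∀ j < P.card, i ≠ j → e i ≠ e j) ∧
  (∀ i < P.card, f '' e i = e ((i + 1) % P.card))

theorem exists_isCyclicFactor_isCellIndex {f : X → X} {P : Finset (Set X)}
    (hcover : ⋃ A ∈ (P : Set (Set X)), A = univ)
    (hdisj : ∀ A ∈ P, ∀ B ∈ P, A ≠ B → Disjoint A B)
    {e : ℕ → Set X} (he : IsCyclicEnumeration f P e) :
    ∃ c, IsCyclicFactor f P.card c ∧ IsCellIndex P c := by
  obtain ⟨he_mem, he_surj, he_inj, he_map⟩ := he
  have hex : ∀ x, ∃ i < P.card, x ∈ e i := fun x => by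
    obtain ⟨A, hA, hxA⟩ := exists_mem_of_biUnion_eq_univ hcover x
    obtain ⟨i, hi, rfl⟩ := he_surj A hA
    exact ⟨i, hi, hxA⟩
  have huniq : ∀ x, ∀ i < P.card, ∀ j < P.card, x ∈ e i → x ∈ e j → i = j := by
    intro x i hi j hj hxi hxj
    by_contra hij
    exact disjoint_left.1 (hdisj _ (he_mem i hi) _ (he_mem j hj) (he_inj i hi j hj hij)) hxi hxj
  choose c hc_lt hc_mem using hex
  have hmap : ∀ x, c (f x) = (c x + 1) % P.card := fun x => by
    refine huniq (f x) _ (hc_lt _) _ (Nat.mod_lt _ ((hc_lt x).trans_le' (Nat.zero_le _)))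
      (hc_mem (f x)) ?_
    rw [← he_map _ (hc_lt x)]
    exact mem_image_of_mem f (hc_mem x)
  have hcell : ∀ A ∈ P, ∀ x ∈ A, A = e (c x) := by
    intro A hA x hxA
    by_contra hne
    exact disjoint_left.1 (hdisj _ hA _ (he_mem _ (hc_lt x)) hne) hxA (hc_mem x)
  refine ⟨c, ⟨hc_lt, hmap⟩, fun A hA x hxA => ?_⟩
  ext y
  rw [hcell A hA x hxA]
  refine ⟨fun hy => ?_, fun hy => huniq y _ (hc_lt y) _ (hc_lt x) (hc_mem y) hy⟩
  rw [← show c y = c x from hy]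
  exact hc_mem y

theorem exists_isCyclicFactor_isCellIndex_eq_zero {f : X → X} {P : Finset (Set X)}
    (hcover : ⋃ A ∈ (P : Set (Set X)), A = univ)
    (hdisj : ∀ A ∈ P, ∀ B ∈ P, A ≠ B → Disjoint A B)
    {e : ℕ → Set X} (he : IsCyclicEnumeration f P e) (x₀ : X) :
    ∃ a, IsCyclicFactor f P.card a ∧ a x₀ = 0 ∧ IsCellIndex P a := by
  obtain ⟨c, hc, hcP⟩ := exists_isCyclicFactor_isCellIndex hcover hdisj he
  obtain ⟨a, ha, ha₀, hac⟩ := hc.exists_normalize x₀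
  refine ⟨a, ha, ha₀, fun A hA x hxA => ?_⟩
  rw [← hcP A hA x hxA]
  ext y
  exact hac y x

end Partitions

section Conjugacy

variable {X : Type*} {α : ℕ → ℕ} {a : ℕ → X → ℕ}

def addressDigits (hlt : ∀ k x, a k x < placeValue α (k + 1)) (x : X) : ∀ i, Fin (α i) :=
  fun i => ⟨a i x / placeValue α i, Nat.div_lt_of_lt_mul (placeValue_succ α i ▸ hlt i x)⟩

variable (hlt : ∀ k x, a k x < placeValue α (k + 1))

theorem prefixValue_addressDigits (hmod : ∀ k x, a (k + 1) x % placeValue α (k + 1) = a k x)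
    (x : X) (k : ℕ) : prefixValue α (addressDigits hlt x) (k + 1) = a k x := by
  induction k with
  | zero => simp [prefixValue_one, addressDigits, placeValue]
  | succ k ih =>
    rw [prefixValue_succ, ih, ← hmod k x]
    exact Nat.mod_add_div' _ _

theorem isLocallyConstant_addressDigits [TopologicalSpace X]
    (hloc : ∀ k, IsLocallyConstant (a k)) (i : ℕ) :
    IsLocallyConstant fun x => addressDigits hlt x i :=
  ((hloc i).comp (· / placeValue α i)).desc _ Fin.val Fin.val_injective

theorem continuous_addressDigits [TopologicalSpace X] (hloc : ∀ k, IsLocallyConstant (a k)) :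
    Continuous (addressDigits hlt) :=
  continuous_pi fun i => (isLocallyConstant_addressDigits hlt hloc i).continuous

theorem addressDigits_injective (hmod : ∀ k x, a (k + 1) x % placeValue α (k + 1) = a k x)
    (hsep : ∀ x y, (∀ k, a k x = a k y) → x = y) : Function.Injective (addressDigits hlt) :=
  fun x y hxy => hsep x y fun k => by
    rw [← prefixValue_addressDigits hlt hmod, hxy, prefixValue_addressDigits hlt hmod]

theorem addressDigits_surjective [TopologicalSpace X] [CompactSpace X]
    (hmod : ∀ k x, a (k + 1) x % placeValue α (k + 1) = a k x)
    (hloc : ∀ k, IsLocallyConstant (a k))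
    (hsurj : ∀ k j, j < placeValue α (k + 1) → ∃ x, a k x = j) :
    Function.Surjective (addressDigits hlt) := by
  intro y
  let C : ℕ → Set X := fun k => {x | a k x = prefixValue α y (k + 1)}
  have hC_anti : ∀ k, C (k + 1) ⊆ C k := fun k x (hx : a (k + 1) x = _) =>
    show a k x = _ by rw [← hmod, hx, prefixValue_succ_mod]
  have hC_closed : ∀ k, IsClosed (C k) := fun k => (hloc k).isClosed_fiber _
  obtain ⟨x, hx⟩ := IsCompact.nonempty_iInter_of_sequence_nonempty_isCompact_isClosed C hC_anti
    (fun k => hsurj k _ (prefixValue_lt_placeValue y _)) (hC_closed 0).isCompact hC_closed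
  exact ⟨x, eq_of_prefixValue_eq fun k => by
    rw [prefixValue_addressDigits hlt hmod]; exact mem_iInter.1 hx k⟩

theorem addressDigits_map {f : X → X} (hα : ∀ i, 2 ≤ α i)
    (hmod : ∀ k x, a (k + 1) x % placeValue α (k + 1) = a k x)
    (hmap : ∀ k x, a k (f x) = (a k x + 1) % placeValue α (k + 1)) (x : X) :
    addressDigits hlt (f x) = phi α (addressDigits hlt x) :=
  eq_of_prefixValue_eq fun k => by
    rw [prefixValue_phi hα, prefixValue_addressDigits hlt hmod,
      prefixValue_addressDigits hlt hmod, hmap]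

end Conjugacy

theorem exists_homeomorph_conj_phi {X : Type*} [TopologicalSpace X] [CompactSpace X]
    {f : X → X} {α : ℕ → ℕ} (hα : ∀ i, 2 ≤ α i) {a : ℕ → X → ℕ} {x₀ : X}
    (ha : ∀ k, IsCyclicFactor f (placeValue α (k + 1)) (a k)) (ha₀ : ∀ k, a k x₀ = 0)
    (hmod : ∀ k x, a (k + 1) x % placeValue α (k + 1) = a k x)
    (hloc : ∀ k, IsLocallyConstant (a k)) (hsep : ∀ x y, (∀ k, a k x = a k y) → x = y) :
    ∃ h : X ≃ₜ (∀ i, Fin (α i)), ∀ x : X, h (f x) = phi α (h x) := by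
  have hlt : ∀ k x, a k x < placeValue α (k + 1) := fun k => (ha k).lt
  have hbij : Function.Bijective (addressDigits hlt) :=
    ⟨addressDigits_injective hlt hmod hsep,
      addressDigits_surjective hlt hmod hloc fun k _ hj => (ha k).exists_eq (ha₀ k) hj⟩
  exact ⟨(continuous_addressDigits hlt hloc).homeoOfEquivCompactToT2 (f := .ofBijective _ hbij),
    addressDigits_map hlt hα hmod fun k => (ha k).map_apply⟩

theorem stmt10_general {X : Type*} [MetricSpace X] [CompactSpace X]
    (f : X → X)
    (α : ℕ → ℕ) (hα : ∀ i, 2 ≤ α i)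
    (P : ℕ → Finset (Set X))
    -- each P k is a clopen partition of X into nonempty sets:
    (hclopen : ∀ k, ∀ A ∈ P k, IsClopen A ∧ A.Nonempty)
    (hcover : ∀ k, ⋃ A ∈ (P k : Set (Set X)), A = univ)
    (hpdisj : ∀ k, ∀ A ∈ P k, ∀ B ∈ P k, A ≠ B → Disjoint A B)
    -- diameters tend to 0:
    (hdiam : ∀ ε > (0 : ℝ), ∃ K : ℕ, ∀ k ≥ K, ∀ A ∈ P k, Metric.diam A < ε)
    -- |P k| = Π_{i=1}^k α(i):
    (hcard : ∀ k, (P k).card = ∏ i ∈ Finset.range (k + 1), α i)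
    -- P (k+1) refines P k:
    (href : ∀ k, ∀ B ∈ P (k + 1), ∃ A ∈ P k, B ⊆ A)
    -- the members of P k are cyclically permuted by f:
    (hcyc : ∀ k, ∃ e : ℕ → Set X,
      (∀ i < (P k).card, e i ∈ P k) ∧
      (∀ A ∈ P k, ∃ i < (P k).card, e i = A) ∧
      (∀ i < (P k).card, ∀ j < (P k).card, i ≠ j → e i ≠ e j) ∧
      (∀ i < (P k).card, f '' e i = e ((i + 1) % (P k).card))) :
    ∃ h : X ≃ₜ (∀ i, Fin (α i)), ∀ x : X, h (f x) = phi α (h x) := by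
  obtain ⟨A₀, hA₀⟩ : (P 0).Nonempty := by
    rw [← Finset.card_pos, hcard 0, Finset.prod_range_one]
    exact (hα 0).trans_lt' two_pos
  obtain ⟨x₀, -⟩ := (hclopen 0 A₀ hA₀).2
  choose e he using hcyc
  choose a ha ha₀ hcell using fun k =>
    exists_isCyclicFactor_isCellIndex_eq_zero (hcover k) (hpdisj k) (he k) x₀
  simp only [hcard] at ha
  have hmod : ∀ k x, a (k + 1) x % placeValue α (k + 1) = a k x := fun k =>
    (ha k).mod_eq_of_factor (ha (k + 1)) (ha₀ k) (ha₀ (k + 1))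
      fun _ _ => (hcell k).eq_of_refines (hcell (k + 1)) (hcover (k + 1)) (href k)
  exact exists_homeomorph_conj_phi hα ha ha₀ hmod
    (fun k => (hcell k).isLocallyConstant (hcover k) fun A hA => (hclopen k A hA).1.isOpen)
    (fun _ _ => eq_of_forall_isCellIndex_eq hcell hcover hdiam)

/-- Block–Keesling characterization: if f : X → X is continuous on a compact metric
space and there is a sequence of finite clopen partitions P_k of X, with diameters
tending to 0, of cardinality Π_{i≤k} α(i), each refined by the next, whose members are
cyclically permuted by f, then (X,f) is topologically conjugate to (Δ_α, φ_α). -/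
theorem stmt10 {X : Type*} [MetricSpace X] [CompactSpace X]
    (f : X → X) (hf : Continuous f)
    (α : ℕ → ℕ) (hα : ∀ i, 2 ≤ α i)
    (P : ℕ → Finset (Set X))
    -- each P k is a clopen partition of X into nonempty sets:
    (hclopen : ∀ k, ∀ A ∈ P k, IsClopen A ∧ A.Nonempty)
    (hcover : ∀ k, ⋃ A ∈ (P k : Set (Set X)), A = univ)
    (hpdisj : ∀ k, ∀ A ∈ P k, ∀ B ∈ P k, A ≠ B → Disjoint A B)
    -- diameters tend to 0:
    (hdiam : ∀ ε > (0 : ℝ), ∃ K : ℕ, ∀ k ≥ K, ∀ A ∈ P k, Metric.diam A < ε)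
    -- |P k| = Π_{i=1}^k α(i):
    (hcard : ∀ k, (P k).card = ∏ i ∈ Finset.range (k + 1), α i)
    -- P (k+1) refines P k:
    (href : ∀ k, ∀ B ∈ P (k + 1), ∃ A ∈ P k, B ⊆ A)
    -- the members of P k are cyclically permuted by f:
    (hcyc : ∀ k, ∃ e : ℕ → Set X,
      (∀ i < (P k).card, e i ∈ P k) ∧
      (∀ A ∈ P k, ∃ i < (P k).card, e i = A) ∧
      (∀ i < (P k).card, ∀ j < (P k).card, i ≠ j → e i ≠ e j) ∧
      (∀ i < (P k).card, f '' e i = e ((i + 1) % (P k).card))) :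
    ∃ h : X ≃ₜ (∀ i, Fin (α i)), ∀ x : X, h (f x) = phi α (h x) :=
  stmt10_general f α hα P hclopen hcover hpdisj hdiam hcard href hcyc
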